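/- Let 0 < α < 1/4 and define f_1, f_2 : ℝ → ℝ by f_1(x) = (1/2 + 2α)x − α and f_2(x) = (1/2 + 2α)x + 1/2 − α. Then the IFS 𝓖 = {ℝ; f_1, f_2} is uniformly contracting (with contracting ratio 1/2 + 2α < 1) and has the average shadowing property. -/
import Mathlib


open Filter Finset

/-- Composition along σ: `IFSIter f σ n = f (σ (n-1)) ∘ ⋯ ∘ f (σ 0)`, with `IFSIter f σ 0 = id`. -/
def IFSIter {X : Type*} {Λ : Type*} (f : Λ → X → X) (σ : ℕ → Λ) : ℕ → X → X
  | 0 => id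
  | n + 1 => f (σ n) ∘ IFSIter f σ n

/-- `(x i)` is a δ-average pseudo-orbit of the IFS `f`. -/
def IsAvgPseudoOrbit {X : Type*} [MetricSpace X] {Λ : Type*}
    (f : Λ → X → X) (δ : ℝ) (x : ℕ → X) : Prop :=
  ∃ N : ℕ, ∃ σ : ℕ → Λ, ∀ n : ℕ, N ≤ n →
    (1 / n : ℝ) * ∑ i ∈ Finset.range n, dist (f (σ i) (x i)) (x (i + 1)) < δ

/-- `(x i)` is ε-shadowed in average by the point `z`. -/
def AvgShadowedBy {X : Type*} [MetricSpace X] {Λ : Type*}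
    (f : Λ → X → X) (ε : ℝ) (x : ℕ → X) (z : X) : Prop :=
  ∃ σ : ℕ → Λ,
    Filter.limsup (fun n : ℕ =>
      (1 / n : ℝ) * ∑ i ∈ Finset.range n, dist (IFSIter f σ i z) (x i)) Filter.atTop < ε

/-- The IFS `f` has the average shadowing property. -/
def HasAvgShadowing {X : Type*} [MetricSpace X] {Λ : Type*} (f : Λ → X → X) : Prop :=
  ∀ ε : ℝ, 0 < ε → ∃ δ : ℝ, 0 < δ ∧
    ∀ x : ℕ → X, IsAvgPseudoOrbit f δ x → ∃ z : X, AvgShadowedBy f ε x z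

/-- An ε-chain of the IFS `f` from `x` to `y`. -/
def IsEpsChain {X : Type*} [MetricSpace X] {Λ : Type*}
    (f : Λ → X → X) (ε : ℝ) (x y : X) : Prop :=
  ∃ n : ℕ, 0 < n ∧ ∃ p : ℕ → X, ∃ lam : ℕ → Λ,
    p 0 = x ∧ p n = y ∧ ∀ i < n, dist (f (lam i) (p i)) (p (i + 1)) ≤ ε

/-- `x` is a chain recurrent point of the IFS `f`. -/
def ChainRecurrentPt {X : Type*} [MetricSpace X] {Λ : Type*}
    (f : Λ → X → X) (x : X) : Prop :=
  ∀ ε : ℝ, 0 < ε → IsEpsChain f ε x x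

/-- The two affine maps of the minimal IFS example. -/
noncomputable def minimalIFS (α : ℝ) : Fin 2 → ℝ → ℝ :=
  ![fun x => (1 / 2 + 2 * α) * x - α,
    fun x => (1 / 2 + 2 * α) * x + 1 / 2 - α]

/-- for `0 < α < 1/4`, the affine IFS is uniformly contracting with
contracting ratio `1/2 + 2α < 1` and has the average shadowing property. -/
theorem minimalIFS_avgShadowing (α : ℝ) (hα0 : 0 < α) (hα1 : α < 1 / 4) :
    (1 / 2 + 2 * α < 1) ∧
    (∀ (i : Fin 2) (x y : ℝ),
      dist (minimalIFS α i x) (minimalIFS α i y) ≤ (1 / 2 + 2 * α) * dist x y) ∧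
    HasAvgShadowing (minimalIFS α) := by
  set β : ℝ := 1 / 2 + 2 * α with hβ
  have hβ0 : 0 ≤ β := by rw [hβ]; linarith
  have hβ1 : β < 1 := by rw [hβ]; linarith
  have h1β : 0 < 1 - β := by linarith
  have hcontr : ∀ (i : Fin 2) (x y : ℝ),
      dist (minimalIFS α i x) (minimalIFS α i y) ≤ β * dist x y := by
    intro i x y
    fin_cases i
    · show dist ((1 / 2 + 2 * α) * x - α) ((1 / 2 + 2 * α) * y - α) ≤ β * dist x y
      rw [Real.dist_eq, Real.dist_eq,
        show (1 / 2 + 2 * α) * x - α - ((1 / 2 + 2 * α) * y - α) = β * (x - y) by rw [hβ]; ring,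
        abs_mul, abs_of_nonneg hβ0]
    · show dist ((1 / 2 + 2 * α) * x + 1 / 2 - α) ((1 / 2 + 2 * α) * y + 1 / 2 - α)
          ≤ β * dist x y
      rw [Real.dist_eq, Real.dist_eq,
        show (1 / 2 + 2 * α) * x + 1 / 2 - α - ((1 / 2 + 2 * α) * y + 1 / 2 - α) = β * (x - y)
          by rw [hβ]; ring,
        abs_mul, abs_of_nonneg hβ0]
  refine ⟨hβ1, hcontr, ?_⟩
  intro ε hε
  refine ⟨(1 - β) * ε / 2, by positivity, ?_⟩
  rintro x ⟨N, σ, hpo⟩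
  refine ⟨x 0, σ, ?_⟩
  set f := minimalIFS α
  set D : ℕ → ℝ := fun i => dist (IFSIter f σ i (x 0)) (x i) with hD
  set e : ℕ → ℝ := fun i => dist (f (σ i) (x i)) (x (i + 1)) with he
  have hD0 : D 0 = 0 := dist_self _
  have hstep : ∀ i, D (i + 1) ≤ β * D i + e i := by
    intro i
    calc D (i + 1) = dist (f (σ i) (IFSIter f σ i (x 0))) (x (i + 1)) := rfl
      _ ≤ dist (f (σ i) (IFSIter f σ i (x 0))) (f (σ i) (x i))
            + dist (f (σ i) (x i)) (x (i + 1)) := dist_triangle _ _ _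
      _ ≤ β * D i + e i := add_le_add (hcontr _ _ _) le_rfl
  have hDnn : ∀ i, 0 ≤ D i := fun i => dist_nonneg
  have henn : ∀ i, 0 ≤ e i := fun i => dist_nonneg
  have hS : ∀ n, ∑ i ∈ range n, D i ≤ (∑ i ∈ range n, e i) / (1 - β) := by
    intro n
    induction n with
    | zero => simp
    | succ n ih =>
      have h1 : ∑ i ∈ range (n + 1), D i = (∑ i ∈ range n, D (i + 1)) + D 0 :=
        Finset.sum_range_succ' D n
      have h2 : ∑ i ∈ range n, D (i + 1) ≤ β * ∑ i ∈ range n, D i + ∑ i ∈ range n, e i := by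
        rw [Finset.mul_sum, ← Finset.sum_add_distrib]
        exact Finset.sum_le_sum fun i _ => hstep i
      have h3 : ∑ i ∈ range n, D i ≤ ∑ i ∈ range (n + 1), D i := by
        rw [Finset.sum_range_succ]; linarith [hDnn n]
      have h4 : ∑ i ∈ range (n + 1), D i
          ≤ β * ∑ i ∈ range (n + 1), D i + ∑ i ∈ range n, e i := by
        have h3' := mul_le_mul_of_nonneg_left h3 hβ0
        linarith [h1, h2, hD0]
      have h5 : ∑ i ∈ range n, e i ≤ ∑ i ∈ range (n + 1), e i := by
        rw [Finset.sum_range_succ]; linarith [henn n]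
      rw [le_div_iff₀ h1β]
      nlinarith
  have hbound : ∀ n : ℕ, max N 1 ≤ n →
      (1 / n : ℝ) * ∑ i ∈ range n, D i ≤ ε / 2 := by
    intro n hn
    have hn1 : (1 : ℕ) ≤ n := le_trans (le_max_right N 1) hn
    have hnpos : (0 : ℝ) < n := by exact_mod_cast hn1
    have hinv : (0 : ℝ) < 1 / n := by positivity
    have h1 : (1 / n : ℝ) * ∑ i ∈ range n, D i
        ≤ (1 / n : ℝ) * ((∑ i ∈ range n, e i) / (1 - β)) :=
      mul_le_mul_of_nonneg_left (hS n) hinv.le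
    have h2 : (1 / n : ℝ) * ∑ i ∈ range n, e i < (1 - β) * ε / 2 :=
      hpo n (le_trans (le_max_left N 1) hn)
    have h3 : (1 / n : ℝ) * ((∑ i ∈ range n, e i) / (1 - β))
        = ((1 / n : ℝ) * ∑ i ∈ range n, e i) / (1 - β) := by ring
    have h4 : ((1 / n : ℝ) * ∑ i ∈ range n, e i) / (1 - β) ≤ ε / 2 := by
      rw [div_le_iff₀ h1β]; nlinarith
    linarith
  have hnn : ∀ n : ℕ, (0 : ℝ) ≤ (1 / n : ℝ) * ∑ i ∈ range n, D i := by
    intro n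
    have : (0 : ℝ) ≤ ∑ i ∈ range n, D i := Finset.sum_nonneg fun i _ => hDnn i
    positivity
  have hls : Filter.limsup (fun n : ℕ => (1 / n : ℝ) * ∑ i ∈ range n, D i) Filter.atTop
      ≤ ε / 2 := by
    apply Filter.limsup_le_of_le
    · exact Filter.isCoboundedUnder_le_of_le Filter.atTop hnn
    · exact Filter.eventually_atTop.2 ⟨max N 1, hbound⟩
  calc Filter.limsup (fun n : ℕ =>
      (1 / n : ℝ) * ∑ i ∈ range n, dist (IFSIter f σ i (x 0)) (x i)) Filter.atTop
      ≤ ε / 2 := hls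
    _ < ε := by linarith
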